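/- Let (i_1,…,i_N) be a reduced word for the longest element w0 of S_n, and order the inversion set I(w0) = {(p,q) : 1 ≤ p < q ≤ n} by (p_1,q_1) < (p_2,q_2) < … < (p_N,q_N), where p_j = σ_{i_1}⋯σ_{i_{j−1}}(i_j) and q_j = σ_{i_1}⋯σ_{i_{j−1}}(i_j+1). Then this total order is a reflection ordering: for every triple p < q < r, either (p,q) < (p,r) < (q,r) or (q,r) < (p,r) < (p,q). -/

import Mathlib

/-!
Run the word as a sorting network: after `t` letters, `σ_{i_{t+1}}` exchanges the two letters
`p_t, q_t` standing in positions `i_{t+1}, i_{t+1}+1`. Every pair starts in increasing order and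
ends reversed (`w0` is the reversal), so every pair is exchanged at some step; as there are exactly
`N = n(n-1)/2` steps, each pair is exchanged exactly once, and `a < b` are still in order after
`t` steps iff `t` is at most the step of `{a, b}`. At the step of `{p, r}` these two letters are
adjacent, so `q` stands left of both (then `(p,q)` is already reversed and `(q,r)` not yet) or
right of both (the mirror situation).
-/

open Equiv Function

namespace Fin

variable {m : ℕ} (k : Fin m) {x y : Fin (m + 1)}

theorem swap_castSucc_succ_lt_iff_of_ne (h : s(x, y) ≠ s(k.castSucc, k.succ)) :
    swap k.castSucc k.succ x < swap k.castSucc k.succ y ↔ x < y := by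
  simp only [swap_apply_def, ne_eq, Sym2.eq_iff, Fin.ext_iff, Fin.lt_def] at *
  split_ifs <;> simp only [Fin.val_castSucc, Fin.val_succ] at * <;> omega

theorem swap_castSucc_succ_lt_iff_of_eq (h : s(x, y) = s(k.castSucc, k.succ)) :
    swap k.castSucc k.succ x < swap k.castSucc k.succ y ↔ ¬ x < y := by
  rcases Sym2.eq_iff.mp h with ⟨rfl, rfl⟩ | ⟨rfl, rfl⟩ <;>
    simp [(castSucc_lt_succ (i := k)).le]

theorem lt_castSucc_iff_lt_succ (hx₁ : x ≠ k.castSucc) (hx₂ : x ≠ k.succ) :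
    x < k.castSucc ↔ x < k.succ := by
  simp only [ne_eq, Fin.ext_iff, Fin.lt_def, val_castSucc, val_succ] at *
  omega

end Fin

namespace ReducedWord

variable {m N : ℕ} (i : Fin N → Fin m)

/-- `(prefixProd i t)⁻¹ a < (prefixProd i t)⁻¹ b` says that after the first `t` letters of the
word, `a` still stands to the left of `b` in one-line notation. -/
def prefixProd (t : ℕ) : Perm (Fin (m + 1)) :=
  ((List.ofFn fun t : Fin N => swap (i t).castSucc (i t).succ).take t).prod

/-- The pair `{p_t, q_t}` of the paper, exchanged by the `t`-th letter of the word. -/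
def inversionPair (t : Fin N) : Sym2 (Fin (m + 1)) :=
  s(prefixProd i t (i t).castSucc, prefixProd i t (i t).succ)

theorem prefixProd_zero : prefixProd i 0 = 1 := by
  simp [prefixProd]

theorem prefixProd_succ (t : Fin N) :
    prefixProd i (t + 1) = prefixProd i t * swap (i t).castSucc (i t).succ := by
  rw [prefixProd, List.prod_take_succ _ _ (by simp)]
  simp [prefixProd]

theorem prefixProd_length :
    prefixProd i N = (List.ofFn fun t : Fin N => swap (i t).castSucc (i t).succ).prod := by
  rw [prefixProd, List.take_of_length_le (by simp)]

theorem not_isDiag_inversionPair (t : Fin N) : ¬ (inversionPair i t).IsDiag := by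
  simp [inversionPair, Fin.castSucc_lt_succ.ne]

theorem map_inv_prefixProd_inversionPair (t : Fin N) :
    (inversionPair i t).map ⇑(prefixProd i t)⁻¹ = s((i t).castSucc, (i t).succ) := by
  simp [inversionPair]

variable {i} {a b : Fin (m + 1)}

theorem inv_prefixProd_succ_apply (t : Fin N) (x : Fin (m + 1)) :
    (prefixProd i (t + 1))⁻¹ x = swap (i t).castSucc (i t).succ ((prefixProd i t)⁻¹ x) := by
  simp [prefixProd_succ, mul_inv_rev, swap_inv]

theorem inv_prefixProd_succ_lt_iff_of_ne {t : Fin N} (h : s(a, b) ≠ inversionPair i t) :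
    (prefixProd i (t + 1))⁻¹ a < (prefixProd i (t + 1))⁻¹ b ↔
      (prefixProd i t)⁻¹ a < (prefixProd i t)⁻¹ b := by
  rw [inv_prefixProd_succ_apply, inv_prefixProd_succ_apply]
  refine Fin.swap_castSucc_succ_lt_iff_of_ne _ fun h' => h ?_
  rw [← map_inv_prefixProd_inversionPair i] at h'
  simpa [Sym2.map_map, Function.comp_def] using congrArg (Sym2.map (prefixProd i t)) h'

theorem inv_prefixProd_succ_lt_iff_of_eq {t : Fin N} (h : s(a, b) = inversionPair i t) :
    (prefixProd i (t + 1))⁻¹ a < (prefixProd i (t + 1))⁻¹ b ↔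
      ¬ (prefixProd i t)⁻¹ a < (prefixProd i t)⁻¹ b := by
  rw [inv_prefixProd_succ_apply, inv_prefixProd_succ_apply]
  refine Fin.swap_castSucc_succ_lt_iff_of_eq _ ?_
  rw [← map_inv_prefixProd_inversionPair i, ← h]
  rfl

theorem exists_inversionPair_eq (hab : a < b)
    (hba : (prefixProd i N)⁻¹ b < (prefixProd i N)⁻¹ a) : ∃ t, inversionPair i t = s(a, b) := by
  by_contra! hne
  suffices ∀ t ≤ N, (prefixProd i t)⁻¹ a < (prefixProd i t)⁻¹ b from
    (this N le_rfl).asymm hba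
  intro t ht
  induction t with
  | zero => simpa [prefixProd_zero] using hab
  | succ t ih =>
    rw [← Fin.val_mk (n := N) ht, inv_prefixProd_succ_lt_iff_of_ne (hne _).symm]
    exact ih (by omega)

theorem inversionPair_injective (hN : N = (m + 1) * m / 2)
    (hrev : ∀ a b : Fin (m + 1), a < b → (prefixProd i N)⁻¹ b < (prefixProd i N)⁻¹ a) :
    Injective (inversionPair i) := by
  let f : Fin N → {z : Sym2 (Fin (m + 1)) // ¬ z.IsDiag} :=
    fun t => ⟨inversionPair i t, not_isDiag_inversionPair i t⟩
  have hf : Surjective f := by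
    rintro ⟨z, hz⟩
    induction z using Sym2.ind with
    | _ a b =>
      rcases lt_or_gt_of_ne (Sym2.mk_isDiag_iff.not.mp hz) with hab | hba
      · obtain ⟨t, ht⟩ := exists_inversionPair_eq hab (hrev a b hab)
        exact ⟨t, Subtype.ext ht⟩
      · obtain ⟨t, ht⟩ := exists_inversionPair_eq hba (hrev b a hba)
        exact ⟨t, Subtype.ext (ht.trans Sym2.eq_swap)⟩
  have hcard : Fintype.card (Fin N) = Fintype.card {z : Sym2 (Fin (m + 1)) // ¬ z.IsDiag} := by
    rw [Sym2.card_subtype_not_diag, Fintype.card_fin, Fintype.card_fin, Nat.choose_two_right,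
      hN, Nat.add_sub_cancel]
  exact fun s t hst =>
    ((Fintype.bijective_iff_surjective_and_card f).mpr ⟨hf, hcard⟩).1 (Subtype.ext hst)

theorem inv_prefixProd_lt_iff (hinj : Injective (inversionPair i)) (hab : a < b) {j : Fin N}
    (hj : inversionPair i j = s(a, b)) {t : ℕ} (ht : t ≤ N) :
    (prefixProd i t)⁻¹ a < (prefixProd i t)⁻¹ b ↔ t ≤ j := by
  induction t with
  | zero => simpa [prefixProd_zero] using hab
  | succ t ih =>
    rw [← Fin.val_mk (n := N) ht]
    by_cases htj : (⟨t, ht⟩ : Fin N) = j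
    · rw [inv_prefixProd_succ_lt_iff_of_eq (htj ▸ hj).symm, ih (by omega), ← htj]
      simp
    · rw [inv_prefixProd_succ_lt_iff_of_ne fun h => htj (hinj (h.symm.trans hj.symm)),
        ih (by omega)]
      have : t ≠ j := fun h => htj (Fin.ext h)
      dsimp only
      omega

theorem inv_prefixProd_eq_of_inversionPair_eq (hinj : Injective (inversionPair i)) (hab : a < b)
    {j : Fin N} (hj : inversionPair i j = s(a, b)) :
    (prefixProd i j)⁻¹ a = (i j).castSucc ∧ (prefixProd i j)⁻¹ b = (i j).succ := by
  have hlt := (inv_prefixProd_lt_iff hinj hab hj j.is_lt.le).mpr le_rfl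
  have hmap := map_inv_prefixProd_inversionPair i j
  rw [hj, Sym2.map_mk] at hmap
  rcases Sym2.eq_iff.mp hmap with h | ⟨ha, hb⟩
  · exact h
  · rw [ha, hb] at hlt
    exact absurd hlt (Fin.castSucc_lt_succ).asymm

theorem lt_lt_or_lt_lt_of_inversionPair_eq (hinj : Injective (inversionPair i))
    {j₁ j₂ j₃ : Fin N} {p q r : Fin (m + 1)} (hpq : p < q) (hqr : q < r)
    (h₁ : inversionPair i j₁ = s(p, q)) (h₂ : inversionPair i j₂ = s(p, r))
    (h₃ : inversionPair i j₃ = s(q, r)) :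
    (j₁ < j₂ ∧ j₂ < j₃) ∨ (j₃ < j₂ ∧ j₂ < j₁) := by
  set g := prefixProd i j₂
  obtain ⟨hp, hr⟩ := inv_prefixProd_eq_of_inversionPair_eq hinj (hpq.trans hqr) h₂
  have hside : g⁻¹ q < g⁻¹ p ↔ g⁻¹ q < g⁻¹ r := by
    rw [hp, hr]
    exact Fin.lt_castSucc_iff_lt_succ _ (hp ▸ (g⁻¹.injective.ne hpq.ne'))
      (hr ▸ (g⁻¹.injective.ne hqr.ne))
  have h₁₂ : j₁ < j₂ ↔ g⁻¹ q < g⁻¹ p := by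
    rw [← not_le, ← Fin.val_fin_le, ← inv_prefixProd_lt_iff hinj hpq h₁ j₂.is_lt.le, not_lt]
    exact ⟨fun h => h.lt_of_ne (g⁻¹.injective.ne hpq.ne'), le_of_lt⟩
  have h₂₃ : j₂ ≤ j₃ ↔ g⁻¹ q < g⁻¹ r := by
    rw [← Fin.val_fin_le, inv_prefixProd_lt_iff hinj hqr h₃ j₂.is_lt.le]
  have hne₁₂ : j₁ ≠ j₂ := fun h => hqr.ne (Sym2.congr_right.mp (h₁.symm.trans (h ▸ h₂)))
  have hne₂₃ : j₂ ≠ j₃ := fun h => hpq.ne (Sym2.congr_left.mp (h₂.symm.trans (h ▸ h₃)))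
  rcases lt_or_gt_of_ne hne₁₂ with h | h
  · exact .inl ⟨h, (h₂₃.mpr (hside.mp (h₁₂.mp h))).lt_of_ne hne₂₃⟩
  · refine .inr ⟨?_, h⟩
    rw [← not_le, h₂₃, ← hside, ← h₁₂, not_lt]
    exact h.le

end ReducedWord

open ReducedWord in
/-- Let `(i_1,…,i_N)` be a reduced word for the longest element `w0` of `S_n`
(here `n = m+1`, `N = n(n−1)/2`), and order the inversion set of `w0` by the
positions `j ↦ (p_j, q_j)` with `p_j = σ_{i_1}⋯σ_{i_{j−1}}(i_j)` and
`q_j = σ_{i_1}⋯σ_{i_{j−1}}(i_j+1)`.  This total order is a reflection ordering: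
for every triple `p < q < r`, either `(p,q) < (p,r) < (q,r)` or
`(q,r) < (p,r) < (p,q)`. -/
theorem stmt_2 (m : ℕ) (N : ℕ) (hN : N = (m + 1) * m / 2)
    (w0 : Equiv.Perm (Fin (m + 1))) (hw0 : ∀ x, w0 x = x.rev)
    (i : Fin N → Fin m)
    (hw : (List.ofFn fun j : Fin N => Equiv.swap (i j).castSucc (i j).succ).prod = w0) :
    ∀ (j₁ j₂ j₃ : Fin N) (p q r : Fin (m + 1)), p < q → q < r →
      (((List.ofFn fun t : Fin N => Equiv.swap (i t).castSucc (i t).succ).take j₁).prod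
          (i j₁).castSucc = p ∧
       ((List.ofFn fun t : Fin N => Equiv.swap (i t).castSucc (i t).succ).take j₁).prod
          (i j₁).succ = q) →
      (((List.ofFn fun t : Fin N => Equiv.swap (i t).castSucc (i t).succ).take j₂).prod
          (i j₂).castSucc = p ∧
       ((List.ofFn fun t : Fin N => Equiv.swap (i t).castSucc (i t).succ).take j₂).prod
          (i j₂).succ = r) →
      (((List.ofFn fun t : Fin N => Equiv.swap (i t).castSucc (i t).succ).take j₃).prod
          (i j₃).castSucc = q ∧
       ((List.ofFn fun t : Fin N => Equiv.swap (i t).castSucc (i t).succ).take j₃).prod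
          (i j₃).succ = r) →
      (j₁ < j₂ ∧ j₂ < j₃) ∨ (j₃ < j₂ ∧ j₂ < j₁) := by
  intro j₁ j₂ j₃ p q r hpq hqr h₁ h₂ h₃
  have hrev : ∀ a b : Fin (m + 1), a < b → (prefixProd i N)⁻¹ b < (prefixProd i N)⁻¹ a := by
    have hw0_inv (x : Fin (m + 1)) : w0⁻¹ x = x.rev :=
      Perm.inv_eq_iff_eq.mpr (by rw [hw0, Fin.rev_rev])
    intro a b hab
    rw [prefixProd_length, hw, hw0_inv, hw0_inv]
    exact Fin.rev_lt_rev.mpr hab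
  refine lt_lt_or_lt_lt_of_inversionPair_eq (inversionPair_injective hN hrev) hpq hqr ?_ ?_ ?_
  · simp only [inversionPair, prefixProd, h₁.1, h₁.2]
  · simp only [inversionPair, prefixProd, h₂.1, h₂.2]
  · simp only [inversionPair, prefixProd, h₃.1, h₃.2]
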